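/- Any equilibrium (x*, y*, v*, z*) of the system with all coordinates strictly positive must equal E₂: x* = s/(d + k(N_dδ/μ)(b/q)), y* = b/q, v* = (N_dδ/μ)(b/q), z* = (δ/p)(k_d N_d x*/μ - 1); such an equilibrium exists iff R₁ > 1. -/

import Mathlib

/-!
The last equation factors as `(q y - b) z = 0`, so a nonzero `z` forces `y = b / q`; the third
equation then determines `v`, the first `x`, and the second `z = (δ / p) (kd Nd x / μ - 1)`.
At this `x` the quantity `kd Nd x / μ` is exactly `R₁`, so the `z`-coordinate of `E₂` is positive
iff `R₁ > 1`, while its other coordinates are always positive.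
-/

section Equilibrium

variable {s d k kd Nd δ μ p q b x y v z : ℝ}

theorem equilibrium_iff_eq_E2 (hz : z ≠ 0) (hd : 0 < d) (hk : 0 < k) (hNd : 0 < Nd)
    (hδ : 0 < δ) (hμ : 0 < μ) (hp : 0 < p) (hq : 0 < q) (hb : 0 < b) :
    ((0 : ℝ) = s - d * x - k * x * v ∧
      (0 : ℝ) = kd * x * v - δ * y - p * y * z ∧
      (0 : ℝ) = Nd * δ * y - μ * v ∧
      (0 : ℝ) = q * y * z - b * z) ↔
    (x = s / (d + k * (Nd * δ / μ) * (b / q)) ∧ y = b / q ∧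
      v = (Nd * δ / μ) * (b / q) ∧ z = (δ / p) * (kd * Nd * x / μ - 1)) := by
  constructor
  · rintro ⟨hx_eq, hz_eq, hv_eq, hy_eq⟩
    have hy : y = b / q := by
      rw [eq_div_iff hq.ne']
      have : (q * y - b) * z = 0 := by linear_combination -hy_eq
      linarith [(mul_eq_zero.mp this).resolve_right hz]
    subst hy
    have hv : v = (Nd * δ / μ) * (b / q) := by
      field_simp at hv_eq ⊢
      linarith
    subst hv
    refine ⟨?_, rfl, rfl, ?_⟩
    · field_simp at hx_eq ⊢
      linarith
    · field_simp at hz_eq ⊢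
      apply mul_left_cancel₀ hb.ne'
      linear_combination hz_eq
  · rintro ⟨rfl, rfl, rfl, rfl⟩
    refine ⟨?_, ?_, ?_, ?_⟩ <;> field_simp <;> ring

theorem reproductionNumber_eq (hd : 0 < d) (hk : 0 < k) (hkd : 0 < kd) (hNd : 0 < Nd)
    (hδ : 0 < δ) (hμ : 0 < μ) (hq : 0 < q) (hb : 0 < b) :
    s / (d * μ / (kd * Nd) + (k / kd) * δ * (b / q)) =
      kd * Nd * (s / (d + k * (Nd * δ / μ) * (b / q))) / μ := by
  field_simp

end Equilibrium

/-- Any strictly positive equilibrium equals E₂; such an equilibrium exists iff R₁ > 1. -/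
theorem E2_unique (s d k kd Nd δ μ p q b : ℝ)
    (hs : 0 < s) (hd : 0 < d) (hk : 0 < k) (hkd : 0 < kd) (hNd : 0 < Nd)
    (hδ : 0 < δ) (hμ : 0 < μ) (hp : 0 < p) (hq : 0 < q) (hb : 0 < b) :
    (∀ x y v z : ℝ, 0 < x → 0 < y → 0 < v → 0 < z →
      (0 : ℝ) = s - d * x - k * x * v →
      (0 : ℝ) = kd * x * v - δ * y - p * y * z →
      (0 : ℝ) = Nd * δ * y - μ * v →
      (0 : ℝ) = q * y * z - b * z →
      x = s / (d + k * (Nd * δ / μ) * (b / q)) ∧ y = b / q ∧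
        v = (Nd * δ / μ) * (b / q) ∧ z = (δ / p) * (kd * Nd * x / μ - 1)) ∧
    ((∃ x y v z : ℝ, 0 < x ∧ 0 < y ∧ 0 < v ∧ 0 < z ∧
      (0 : ℝ) = s - d * x - k * x * v ∧
      (0 : ℝ) = kd * x * v - δ * y - p * y * z ∧
      (0 : ℝ) = Nd * δ * y - μ * v ∧
      (0 : ℝ) = q * y * z - b * z) ↔
      1 < s / (d * μ / (kd * Nd) + (k / kd) * δ * (b / q))) := by
  refine ⟨fun x y v z _ _ _ hz h₁ h₂ h₃ h₄ =>
    (equilibrium_iff_eq_E2 hz.ne' hd hk hNd hδ hμ hp hq hb).mp ⟨h₁, h₂, h₃, h₄⟩, ?_⟩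
  rw [reproductionNumber_eq hd hk hkd hNd hδ hμ hq hb]
  constructor
  · rintro ⟨x, y, v, z, -, -, -, hz, heq⟩
    obtain ⟨rfl, -, -, rfl⟩ := (equilibrium_iff_eq_E2 hz.ne' hd hk hNd hδ hμ hp hq hb).mp heq
    exact sub_pos.mp (pos_of_mul_pos_right hz (by positivity))
  · intro hR
    have hz : 0 < δ / p * (kd * Nd * (s / (d + k * (Nd * δ / μ) * (b / q))) / μ - 1) :=
      mul_pos (by positivity) (sub_pos.mpr hR)
    exact ⟨_, _, _, _, by positivity, by positivity, by positivity, hz,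
      (equilibrium_iff_eq_E2 hz.ne' hd hk hNd hδ hμ hp hq hb).mpr ⟨rfl, rfl, rfl, rfl⟩⟩
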